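/- arXiv:1410.5554 — 6 statements merged into one kernel-verified Lean document; each statement's English description precedes it below -/
import Mathlib

section
/- If U_e ∈ S_loc(1) (the discrete equilibrium distribution of U is locally subexponential with span one), then U ∈ S* (i.e., lim_{k→∞} Σ_{l=0}^{k} P(U>k−l)P(U>l)/P(U>k) = 2E[U] < ∞), and conversely if U ∈ S*, then U_e ∈ S_loc(1). -/
open Filter Topology

/-- `P(U > k)` for a ℤ₊-valued random variable with pmf `p`. -/
noncomputable def tail (p : ℕ → ℝ) (k : ℕ) : ℝ := ∑' l : ℕ, p (k + 1 + l)

/-- Discrete convolution of two pmfs on ℤ₊. -/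
noncomputable def conv (f g : ℕ → ℝ) (k : ℕ) : ℝ :=
  ∑ l ∈ Finset.range (k + 1), f (k - l) * g l

/-- Mean of a ℤ₊-valued random variable with pmf `p`. -/
noncomputable def pmean (p : ℕ → ℝ) : ℝ := ∑' k : ℕ, (k : ℝ) * p k

/-- `V ∈ S_loc(1)`: locally subexponential with span one. -/
def SLocOne (q : ℕ → ℝ) : Prop :=
  (∀ᶠ k in atTop, 0 < q k) ∧
    Tendsto (fun k => q (k + 1) / q k) atTop (nhds 1) ∧
    Tendsto (fun k => conv q q k / q k) atTop (nhds 2)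

/-- `U ∈ S*`. -/
noncomputable def SStar (p : ℕ → ℝ) : Prop :=
  Tendsto (fun k => (∑ l ∈ Finset.range (k + 1), tail p (k - l) * tail p l) / tail p k)
    atTop (nhds (2 * pmean p))

/-! Since `P(U_e = k) = P(U > k) / E U`, the convolution ratio of `U_e` is the `S*` ratio divided
by `E U`, so both directions reduce to showing that `U ∈ S*` forces `P(U > k + 1) / P(U > k) → 1`.
For the antitone `T = tail p`, the first and the last `t + 1` terms of the convolution give
`conv T T (k + 1) ≥ 2 (T (k + 1) T 0 + T k ∑_{l=1}^{t} T l)`. Dividing by `T (k + 1)` and letting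
`k → ∞` yields `limsup T k / T (k + 1) ≤ (E U - T 0) / ∑_{l=1}^{t} T l`, which tends to `1` as
`t → ∞` because `∑_l T l = E U`. -/

section Tail

variable {p : ℕ → ℝ}

lemma tail_eq_add_tail_succ (hp : Summable p) (k : ℕ) :
    tail p k = p (k + 1) + tail p (k + 1) := by
  have hs : Summable fun l => p (k + 1 + l) := hp.comp_injective (add_right_injective _)
  rw [tail, tail, hs.tsum_eq_zero_add]
  simp only [add_zero, add_assoc, add_comm 1]

lemma tail_nonneg (hnn : ∀ k, 0 ≤ p k) (k : ℕ) : 0 ≤ tail p k :=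
  tsum_nonneg fun _ => hnn _

lemma tail_antitone (hnn : ∀ k, 0 ≤ p k) (hp : Summable p) : Antitone (tail p) :=
  antitone_nat_of_succ_le fun k => by
    rw [tail_eq_add_tail_succ hp k]
    linarith [hnn (k + 1)]

lemma sum_range_tail (hp : Summable p) (t : ℕ) :
    ∑ l ∈ Finset.range t, tail p l
      = ∑ n ∈ Finset.range (t + 1), (n : ℝ) * p n + t * tail p t := by
  induction t with
  | zero => simp
  | succ t ih =>
    rw [Finset.sum_range_succ, ih, Finset.sum_range_succ _ (t + 1),
      tail_eq_add_tail_succ hp t]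
    push_cast
    ring

lemma hasSum_tail (hnn : ∀ k, 0 ≤ p k) (hp : Summable p)
    (hmean : Summable fun k : ℕ => (k : ℝ) * p k) : HasSum (tail p) (pmean p) := by
  rw [hasSum_iff_tendsto_nat_of_nonneg (tail_nonneg hnn), funext (sum_range_tail hp)]
  have hhead : Tendsto (fun t => ∑ n ∈ Finset.range (t + 1), (n : ℝ) * p n) atTop
      (𝓝 (pmean p)) :=
    hmean.hasSum.tendsto_sum_nat.comp (tendsto_add_atTop_nat 1)
  -- `t * P(U > t)` is dominated by the tail `∑_{n > t} n P(U = n)` of the mean series.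
  have hrest : Tendsto (fun t : ℕ => (t : ℝ) * tail p t) atTop (𝓝 0) := by
    refine squeeze_zero (fun t => mul_nonneg t.cast_nonneg (tail_nonneg hnn t)) (fun t => ?_)
      ((tendsto_sum_nat_add fun n : ℕ => (n : ℝ) * p n).comp (tendsto_add_atTop_nat 1))
    rw [tail, ← tsum_mul_left]
    refine Summable.tsum_le_tsum (fun l => ?_)
      ((hp.comp_injective (add_right_injective (t + 1))).mul_left _)
      (hmean.comp_injective (add_left_injective (t + 1)))
    simp only [add_comm l]
    exact mul_le_mul_of_nonneg_right (by push_cast; linarith [l.cast_nonneg (α := ℝ)]) (hnn _)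
  simpa using hhead.add hrest

end Tail

section Conv

variable {f : ℕ → ℝ}

lemma two_mul_sum_range_le_conv (hf : ∀ k, 0 ≤ f k) {t k : ℕ} (htk : 2 * t ≤ k) :
    2 * ∑ l ∈ Finset.range t, f (k - l) * f l ≤ conv f f k := by
  set g : ℕ → ℝ := fun l => f (k - l) * f l
  have hdisj : Disjoint (Finset.range t) ((Finset.range t).image (k - ·)) := by
    simp only [Finset.disjoint_left, Finset.mem_range, Finset.mem_image]
    omega
  have hsub : Finset.range t ∪ (Finset.range t).image (k - ·) ⊆ Finset.range (k + 1) := by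
    intro l
    simp only [Finset.mem_union, Finset.mem_range, Finset.mem_image]
    omega
  have hreflect : ∑ l ∈ (Finset.range t).image (k - ·), g l = ∑ l ∈ Finset.range t, g l := by
    rw [Finset.sum_image fun a ha b hb hab => by
      simp only [Finset.coe_range, Set.mem_Iio] at ha hb
      omega]
    refine Finset.sum_congr rfl fun l hl => ?_
    simp only [g, Nat.sub_sub_self (by linarith [Finset.mem_range.1 hl] : l ≤ k), mul_comm]
  calc 2 * ∑ l ∈ Finset.range t, g l
      = ∑ l ∈ Finset.range t ∪ (Finset.range t).image (k - ·), g l := by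
        rw [Finset.sum_union hdisj, hreflect, two_mul]
    _ ≤ conv f f k :=
        Finset.sum_le_sum_of_subset_of_nonneg hsub fun l _ _ => mul_nonneg (hf _) (hf _)

lemma conv_succ_lower_bound (hf : ∀ k, 0 ≤ f k) (hanti : Antitone f) {t k : ℕ}
    (htk : 2 * t + 1 ≤ k) :
    2 * (f (k + 1) * f 0 + f k * ∑ l ∈ Finset.range t, f (l + 1)) ≤ conv f f (k + 1) := by
  refine le_trans ?_ (two_mul_sum_range_le_conv hf (t := t + 1) (by omega))
  rw [Finset.sum_range_succ', Finset.mul_sum, Nat.sub_zero]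
  have hmid : ∑ l ∈ Finset.range t, f k * f (l + 1)
      ≤ ∑ l ∈ Finset.range t, f (k + 1 - (l + 1)) * f (l + 1) :=
    Finset.sum_le_sum fun l _ => mul_le_mul_of_nonneg_right (hanti (by omega)) (hf _)
  linarith

lemma conv_div_const_div (c : ℝ) (k : ℕ) :
    conv (fun j => f j / c) (fun j => f j / c) k / (f k / c) = conv f f k / f k / c := by
  simp only [conv, div_mul_div_comm, ← Finset.sum_div]
  rcases eq_or_ne c 0 with rfl | hc
  · simp
  · field_simp

end Conv

lemma sStar_iff_tendsto_conv {p : ℕ → ℝ} :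
    SStar p ↔ Tendsto (fun k => conv (tail p) (tail p) k / tail p k) atTop (𝓝 (2 * pmean p)) :=
  Iff.rfl

lemma tendsto_tail_succ_div_tail {p : ℕ → ℝ} (hnn : ∀ k, 0 ≤ p k) (hp : Summable p)
    (htail : ∀ k, 0 < tail p k) (hmean : Summable fun k : ℕ => (k : ℝ) * p k)
    (hS : SStar p) : Tendsto (fun k => tail p (k + 1) / tail p k) atTop (𝓝 1) := by
  suffices h : Tendsto (fun k => tail p k / tail p (k + 1)) atTop (𝓝 1) by
    simpa using h.inv₀ one_ne_zero
  set T := tail p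
  set m := pmean p
  have hanti : Antitone T := tail_antitone hnn hp
  have hS' : Tendsto (fun k => conv T T (k + 1) / T (k + 1)) atTop (𝓝 (2 * m)) :=
    (sStar_iff_tendsto_conv.1 hS).comp (tendsto_add_atTop_nat 1)
  have hshift : HasSum (fun l => T (l + 1)) (m - T 0) := by
    simpa using (hasSum_nat_add_iff' 1).2 (hasSum_tail hnn hp hmean)
  have hshift_pos : 0 < m - T 0 :=
    hasSum_lt (f := 0) (i := 0) (fun l => (htail (l + 1)).le) (htail 1) hasSum_zero hshift
  refine tendsto_order.2 ⟨fun a ha => Eventually.of_forall fun k =>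
    ha.trans_le ((one_le_div (htail _)).2 (hanti k.le_succ)), fun c hc => ?_⟩
  obtain ⟨t, ht⟩ := ((hshift.tendsto_sum_nat.const_mul c).eventually
    (lt_mem_nhds (by nlinarith : m - T 0 < c * (m - T 0)))).exists
  set A := ∑ l ∈ Finset.range t, T (l + 1)
  have hA : 0 < 2 * A := by nlinarith
  have hbound : ∀ᶠ k in atTop,
      T k / T (k + 1) ≤ (conv T T (k + 1) / T (k + 1) - 2 * T 0) / (2 * A) := by
    filter_upwards [eventually_ge_atTop (2 * t + 1)] with k hk
    have hconv_ge := conv_succ_lower_bound (tail_nonneg hnn) hanti hk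
    rw [le_div_iff₀ hA, le_sub_iff_add_le, div_mul_eq_mul_div, div_add' _ _ _ (htail _).ne',
      div_le_div_iff_of_pos_right (htail _)]
    linarith
  have hlim : (2 * m - 2 * T 0) / (2 * A) < c := by
    rw [div_lt_iff₀ hA]
    linarith
  filter_upwards [hbound, ((hS'.sub_const _).div_const _).eventually (gt_mem_nhds hlim)]
    with k hk hk' using hk.trans_lt hk'

/-- The equilibrium distribution `U_e` of `U` is locally subexponential with span one
iff `U ∈ S*`. -/
theorem stmt0 (p : ℕ → ℝ) (hnn : ∀ k, 0 ≤ p k) (hsum : HasSum p 1)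
    (htail : ∀ k, 0 < tail p k) (hmean : Summable fun k : ℕ => (k : ℝ) * p k)
    (hmeanpos : 0 < pmean p) :
    SLocOne (fun k => tail p k / pmean p) ↔ SStar p := by
  have hm : pmean p ≠ 0 := hmeanpos.ne'
  have hconv : Tendsto (fun k => conv (tail p · / pmean p) (tail p · / pmean p) k
      / (tail p k / pmean p)) atTop (𝓝 2) ↔ SStar p := by
    simp_rw [conv_div_const_div, sStar_iff_tendsto_conv]
    exact ⟨fun h => by simpa [hm] using h.mul_const (pmean p),
      fun h => by simpa [hm] using h.div_const (pmean p)⟩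
  simp_rw [SLocOne, hconv, div_div_div_cancel_right₀ hm]
  exact ⟨fun h => h.2.2, fun hS => ⟨.of_forall fun k => div_pos (htail k) hmeanpos,
    tendsto_tail_succ_div_tail hnn hsum.summable htail hmean hS, hS⟩⟩
end

section
/- Let U be a ℤ₊-valued random variable with P(U=k) > 0 for all sufficiently large k. Suppose U is locally long-tailed with span one, i.e., lim_{k→∞} P(U=k+1)/P(U=k) = 1. Then for any positive integer h, any l₀ ∈ ℤ₊ and any ν ∈ {0,1,…,h−1}, lim_{k→∞} (Σ_{l=l₀}^{∞} P(U = k + l·h + ν)) / P(U > k) = 1/h. -/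
/-!
Write `S_c(k) = ∑_l P(U = k + l h + c)`. Local long-tailedness gives `P(U = m + c) ~ P(U = m)`,
and summing this termwise along a progression gives `S_c ~ S_0` for every fixed `c`. Splitting
`{m > k}` into its residue classes mod `h` gives `P(U > k) = ∑_{j<h} S_{j+1}(k) ~ h S_0(k)`, while
the sum in question is `S_{l₀ h + ν}(k) ~ S_0(k)`.
-/

open Filter Topology

open Asymptotics

theorem Nat.add_mul_right_injective {h : ℕ} (hh : 0 < h) (k : ℕ) :
    Function.Injective fun l => k + l * h :=
  (add_right_injective k).comp (mul_left_injective₀ hh.ne')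

theorem Asymptotics.IsEquivalent.comp_add_nat {β : Type*} [NormedAddCommGroup β] {u : ℕ → β}
    (hu : (fun k => u (k + 1)) ~[atTop] u) (c : ℕ) : (fun k => u (k + c)) ~[atTop] u := by
  induction c with
  | zero => exact IsEquivalent.refl
  | succ c ih => exact (hu.comp_tendsto (tendsto_add_atTop_nat c)).trans ih

theorem Asymptotics.IsEquivalent.tsum_progression {f g : ℕ → ℝ} (hfg : f ~[atTop] g)
    (hg : 0 ≤ g) (hf : Summable f) (hgs : Summable g) {h : ℕ} (hh : 0 < h) :
    (fun k => ∑' l, f (k + l * h)) ~[atTop] fun k => ∑' l, g (k + l * h) := by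
  refine IsLittleO.of_bound fun ε hε => ?_
  obtain ⟨K, hK⟩ := eventually_atTop.mp (hfg.isLittleO.bound hε)
  filter_upwards [eventually_ge_atTop K] with k hk
  have hfk : Summable fun l => f (k + l * h) :=
    hf.comp_injective (Nat.add_mul_right_injective hh k)
  have hgk : Summable fun l => g (k + l * h) :=
    hgs.comp_injective (Nat.add_mul_right_injective hh k)
  rw [Pi.sub_apply, ← hfk.tsum_sub hgk, Real.norm_of_nonneg (tsum_nonneg fun l => hg _)]
  refine tsum_of_norm_bounded (hgk.hasSum.mul_left ε) fun l => ?_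
  simpa [Real.norm_of_nonneg (hg _)] using hK (k + l * h) (by omega)

theorem tail_eq_sum_tsum_progression {p : ℕ → ℝ} (hp : Summable p) (h : ℕ) [NeZero h]
    (k : ℕ) :
    tail p k = ∑ j : ZMod h, ∑' l, p (k + l * h + (j.val + 1)) := by
  have hpk : Summable fun l => p (k + 1 + l) := hp.comp_injective (add_right_injective (k + 1))
  rw [tail, Nat.sumByResidueClasses hpk h]
  exact Finset.sum_congr rfl fun j _ => tsum_congr fun l => congrArg p (by ring)

theorem stmt1_general (p : ℕ → ℝ) (hnn : ∀ k, 0 ≤ p k) (hsum : HasSum p 1)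
    (hpos : ∀ᶠ k in atTop, 0 < p k)
    (hll : Tendsto (fun k => p (k + 1) / p k) atTop (nhds 1))
    (h : ℕ) (hh : 0 < h) (l₀ : ℕ) (ν : ℕ) :
    Tendsto (fun k => (∑' l : ℕ, p (k + (l₀ + l) * h + ν)) / tail p k)
      atTop (nhds (1 / (h : ℝ))) := by
  have : NeZero h := ⟨hh.ne'⟩
  have hp := hsum.summable
  have hS₀ : ∀ᶠ k in atTop, ∑' l, p (k + l * h) ≠ 0 := by
    filter_upwards [hpos] with k hk
    refine (hk.trans_le ?_).ne'
    simpa using (hp.comp_injective (Nat.add_mul_right_injective hh k)).le_tsum 0 fun l _ => hnn _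
  have hratio (c : ℕ) :
      Tendsto (fun k => (∑' l, p (k + l * h + c)) / ∑' l, p (k + l * h)) atTop (𝓝 1) :=
    (isEquivalent_iff_tendsto_one hS₀).mp <|
      ((isEquivalent_of_tendsto_one hll).comp_add_nat c).tsum_progression hnn
        (hp.comp_injective (add_left_injective c)) hp hh
  have htail : Tendsto (fun k => tail p k / ∑' l, p (k + l * h)) atTop (𝓝 h) := by
    simp_rw [tail_eq_sum_tsum_progression hp h, Finset.sum_div]
    simpa using tendsto_finsetSum Finset.univ fun (j : ZMod h) _ => hratio (j.val + 1)
  refine ((hratio (l₀ * h + ν)).div htail (by positivity)).congr' ?_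
  filter_upwards [hS₀] with k hk
  rw [Pi.div_apply, div_div_div_cancel_right₀ hk]
  congr with l
  ring_nf

/-- If `U` is locally long-tailed with span one, then for every `h ≥ 1`, `l₀ ∈ ℤ₊` and
`ν ∈ {0,…,h-1}`, `(Σ_{l ≥ l₀} P(U = k + lh + ν)) / P(U > k) → 1/h`. -/
theorem stmt1 (p : ℕ → ℝ) (hnn : ∀ k, 0 ≤ p k) (hsum : HasSum p 1)
    (hpos : ∀ᶠ k in atTop, 0 < p k)
    (hll : Tendsto (fun k => p (k + 1) / p k) atTop (nhds 1))
    (h : ℕ) (hh : 0 < h) (l₀ : ℕ) (ν : ℕ) (hν : ν < h) :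
    Tendsto (fun k => (∑' l : ℕ, p (k + (l₀ + l) * h + ν)) / tail p k)
      atTop (nhds (1 / (h : ℝ))) :=
  stmt1_general p hnn hsum hpos hll h hh l₀ ν
end

section
/- Let {F(k)} and {F_j(k)}, j=1,…,m, be probability mass functions on ℤ₊. Suppose F is locally subexponential with span one and lim_{k→∞} F_j(k)/F(k) = c_j ∈ [0,∞) for each j. Then for any ε > 0 there exists C_ε ∈ (0,∞) such that for all k > sup{k : F(k)=0} and all positive integers n₁,…,n_m, the convolution satisfies F₁^{*n₁} * F₂^{*n₂} * ⋯ * F_m^{*n_m}(k) ≤ C_ε (1+ε)^{n₁+⋯+n_m} F(k). -/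
/-! Kesten's argument. Let `H` be a convolution of `n` of the `F_j` and split `(F_j * H)(k)`
according to `l < K`, `K ≤ l ≤ k - K` and `l > k - K`. Each `F_j` is eventually `≤ d F`, and
`F` is long-tailed, so if `H ≤ a F` the two outer ranges contribute at most `d (K + 1) F(k)`
and `a (1 + δ) F(k)` for large `k`. Subexponentiality makes the middle part of `F * F` at most
`δ F(k)` once `K` is large, so the middle range contributes `≤ d a δ F(k)`. For `a` large this
gives `F_j * H ≤ a (1 + ε) F` beyond some `K₂`, while below `K₂` the trivial bound `≤ 1` is
absorbed into the constant; induction on `n` concludes. -/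

open Filter Topology

/-- Point mass at 0 (unit for convolution). -/
noncomputable def delta0 : ℕ → ℝ := fun k => if k = 0 then 1 else 0

/-- Convolution of a list of sequences. -/
noncomputable def convList : List (ℕ → ℝ) → ℕ → ℝ
  | [] => delta0
  | f :: fs => conv f (convList fs)

open Finset

def IsProbMass (g : ℕ → ℝ) : Prop :=
  (∀ k, 0 ≤ g k) ∧ HasSum g 1

def LongTailed (F : ℕ → ℝ) : Prop :=
  (∀ᶠ k in atTop, 0 < F k) ∧ Tendsto (fun k => F (k + 1) / F k) atTop (𝓝 1)

theorem SLocOne.longTailed {F : ℕ → ℝ} (hF : SLocOne F) : LongTailed F :=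
  ⟨hF.1, hF.2.1⟩

/-- The part of `conv f g k` where both arguments are at least `K`. -/
noncomputable def convMiddle (f g : ℕ → ℝ) (K k : ℕ) : ℝ :=
  ∑ l ∈ Ico K (k + 1 - K), f (k - l) * g l

theorem conv_eq_add_convMiddle_add (f g : ℕ → ℝ) {K k : ℕ} (h : 2 * K ≤ k + 1) :
    conv f g k = ∑ l ∈ range K, f (k - l) * g l + convMiddle f g K k
      + ∑ l ∈ range K, f l * g (k - l) := by
  have htop : ∑ l ∈ Ico (k + 1 - K) (k + 1), f (k - l) * g l
      = ∑ l ∈ range K, f l * g (k - l) := by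
    have := sum_Ico_reflect (fun l => f (k - l) * g l) 0 (show K ≤ k + 1 by omega)
    rw [Nat.sub_zero] at this
    rw [← this, range_eq_Ico]
    refine sum_congr rfl fun l hl => ?_
    rw [mem_Ico] at hl
    rw [Nat.sub_sub_self (by omega)]
  rw [conv, convMiddle, ← htop, ← sum_range_add_sum_Ico _ (by omega : K ≤ k + 1),
    ← sum_Ico_consecutive _ (by omega : K ≤ k + 1 - K) (by omega : k + 1 - K ≤ k + 1), add_assoc]

theorem conv_nonneg {f g : ℕ → ℝ} (hf : ∀ k, 0 ≤ f k) (hg : ∀ k, 0 ≤ g k) (k : ℕ) :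
    0 ≤ conv f g k :=
  sum_nonneg fun _ _ => mul_nonneg (hf _) (hg _)

theorem conv_le_one {f g : ℕ → ℝ} (hf : IsProbMass f)
    (hg1 : ∀ k, g k ≤ 1) (k : ℕ) : conv f g k ≤ 1 :=
  calc conv f g k ≤ ∑ l ∈ range (k + 1), f (k - l) :=
        sum_le_sum fun l _ => mul_le_of_le_one_right (hf.1 _) (hg1 l)
    _ = ∑ l ∈ range (k + 1), f l := sum_range_reflect f (k + 1)
    _ ≤ 1 := sum_le_hasSum _ (fun i _ => hf.1 i) hf.2

theorem delta0_nonneg (k : ℕ) : 0 ≤ delta0 k := by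
  unfold delta0; split_ifs <;> norm_num

theorem delta0_le_one (k : ℕ) : delta0 k ≤ 1 := by
  unfold delta0; split_ifs <;> norm_num

theorem convList_nonneg_and_le_one {L : List (ℕ → ℝ)} (hL : ∀ g ∈ L, IsProbMass g) (k : ℕ) :
    0 ≤ convList L k ∧ convList L k ≤ 1 := by
  induction L generalizing k with
  | nil => exact ⟨delta0_nonneg k, delta0_le_one k⟩
  | cons f fs ih =>
    have ih' := ih fun g hg => hL g (List.mem_cons_of_mem f hg)
    have hf := hL f List.mem_cons_self
    exact ⟨conv_nonneg hf.1 (fun l => (ih' l).1) k,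
      conv_le_one hf (fun l => (ih' l).2) k⟩

theorem LongTailed.tendsto_shift_div {F : ℕ → ℝ} (hF : LongTailed F) (j : ℕ) :
    Tendsto (fun k => F (k - j) / F k) atTop (𝓝 1) := by
  induction j with
  | zero =>
    refine tendsto_const_nhds.congr' ?_
    filter_upwards [hF.1] with k hk
    rw [Nat.sub_zero, div_self hk.ne']
  | succ j ih =>
    have hback : Tendsto (fun k => F k / F (k + 1)) atTop (𝓝 1) := by
      simpa only [inv_div, inv_one] using hF.2.inv₀ one_ne_zero
    have hprod := (hback.comp (tendsto_sub_atTop_nat (j + 1))).mul ih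
    rw [one_mul] at hprod
    refine hprod.congr' ?_
    filter_upwards [eventually_ge_atTop (j + 1),
      (tendsto_sub_atTop_nat j).eventually hF.1] with k hk hpos
    have hshift : k - (j + 1) + 1 = k - j := by omega
    simp only [Function.comp_apply, hshift]
    field_simp [hpos.ne']

theorem LongTailed.tendsto_sum_mul_shift_div {F : ℕ → ℝ} (hF : LongTailed F) (G : ℕ → ℝ)
    (K : ℕ) :
    Tendsto (fun k => (∑ l ∈ range K, G l * F (k - l)) / F k) atTop
      (𝓝 (∑ l ∈ range K, G l)) := by
  simp_rw [sum_div, mul_div_assoc]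
  exact tendsto_finsetSum _ fun l _ => by
    simpa using (hF.tendsto_shift_div l).const_mul (G l)

theorem LongTailed.eventually_sum_mul_shift_le {F G : ℕ → ℝ} {K : ℕ} {B : ℝ}
    (hF : LongTailed F) (hB : ∑ l ∈ range K, G l < B) :
    ∀ᶠ k in atTop, ∑ l ∈ range K, G l * F (k - l) ≤ B * F k := by
  filter_upwards [(hF.tendsto_sum_mul_shift_div G K).eventually_lt_const hB, hF.1] with k h hk
  exact ((div_lt_iff₀ hk).1 h).le

theorem SLocOne.eventually_convMiddle_le {F : ℕ → ℝ} (hF : HasSum F 1) (hS : SLocOne F)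
    {δ : ℝ} (hδ : 0 < δ) : ∀ᶠ K in atTop, ∀ᶠ k in atTop, convMiddle F F K k ≤ δ * F k := by
  filter_upwards [hF.tendsto_sum_nat.eventually_const_lt (show 1 - δ / 2 < 1 by linarith)]
    with K hK
  have hlim : Tendsto (fun k => convMiddle F F K k / F k) atTop
      (𝓝 (2 - 2 * ∑ l ∈ range K, F l)) := by
    refine (hS.2.2.sub ((hS.longTailed.tendsto_sum_mul_shift_div F K).const_mul 2)).congr' ?_
    filter_upwards [eventually_ge_atTop (2 * K)] with k hk
    have hswap : ∑ l ∈ range K, F (k - l) * F l = ∑ l ∈ range K, F l * F (k - l) :=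
      sum_congr rfl fun _ _ => mul_comm _ _
    rw [conv_eq_add_convMiddle_add F F (K := K) (by omega), hswap]
    ring
  filter_upwards [hlim.eventually_lt_const (show 2 - 2 * ∑ l ∈ range K, F l < δ by linarith),
    hS.1] with k h hk
  exact ((div_lt_iff₀ hk).1 h).le

theorem conv_le_of_split {F g H : ℕ → ℝ} {a d B δ : ℝ} {K k : ℕ}
    (hg : ∀ l, 0 ≤ g l) (hH0 : ∀ l, 0 ≤ H l) (hH1 : ∀ l, H l ≤ 1) (hd : 0 ≤ d) (ha : 0 ≤ a)
    (hgF : ∀ l, K ≤ l → g l ≤ d * F l) (hHF : ∀ l, K ≤ l → H l ≤ a * F l)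
    (hk : 2 * K ≤ k + 1) (hlow : ∑ l ∈ range K, F (k - l) ≤ B * F k)
    (hhigh : ∑ l ∈ range K, g l * F (k - l) ≤ (1 + δ) * F k)
    (hmid : convMiddle F F K k ≤ δ * F k) :
    conv g H k ≤ (d * B + a * (d * δ + 1 + δ)) * F k := by
  have hlow' : ∑ l ∈ range K, g (k - l) * H l ≤ d * (B * F k) :=
    calc ∑ l ∈ range K, g (k - l) * H l ≤ ∑ l ∈ range K, d * F (k - l) :=
          sum_le_sum fun l hl => (mul_le_of_le_one_right (hg _) (hH1 l)).trans
            (hgF _ (by rw [mem_range] at hl; omega))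
      _ = d * ∑ l ∈ range K, F (k - l) := (mul_sum _ _ _).symm
      _ ≤ d * (B * F k) := mul_le_mul_of_nonneg_left hlow hd
  have hmid' : convMiddle g H K k ≤ d * a * (δ * F k) :=
    calc convMiddle g H K k ≤ ∑ l ∈ Ico K (k + 1 - K), d * a * (F (k - l) * F l) :=
          sum_le_sum fun l hl => by
            rw [mem_Ico] at hl
            have hgk : g (k - l) ≤ d * F (k - l) := hgF _ (by omega)
            calc g (k - l) * H l ≤ d * F (k - l) * (a * F l) :=
                  mul_le_mul hgk (hHF l hl.1) (hH0 l) ((hg _).trans hgk)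
              _ = d * a * (F (k - l) * F l) := by ring
      _ = d * a * convMiddle F F K k := (mul_sum _ _ _).symm
      _ ≤ d * a * (δ * F k) := mul_le_mul_of_nonneg_left hmid (mul_nonneg hd ha)
  have hhigh' : ∑ l ∈ range K, g l * H (k - l) ≤ a * ((1 + δ) * F k) :=
    calc ∑ l ∈ range K, g l * H (k - l) ≤ ∑ l ∈ range K, a * (g l * F (k - l)) :=
          sum_le_sum fun l hl => by
            rw [mem_range] at hl
            calc g l * H (k - l) ≤ g l * (a * F (k - l)) :=
                  mul_le_mul_of_nonneg_left (hHF _ (by omega)) (hg l)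
              _ = a * (g l * F (k - l)) := by ring
      _ = a * ∑ l ∈ range K, g l * F (k - l) := (mul_sum _ _ _).symm
      _ ≤ a * ((1 + δ) * F k) := mul_le_mul_of_nonneg_left hhigh ha
  rw [conv_eq_add_convMiddle_add g H hk]
  linarith

theorem convList_le_of_conv_le {S : Set (ℕ → ℝ)} {F : ℕ → ℝ} {A r : ℝ} {K₂ : ℕ}
    (hS : ∀ g ∈ S, IsProbMass g) (hA : 0 ≤ A) (hr : 1 ≤ r) (hK₂ : 0 < K₂)
    (hsmall : ∀ k < K₂, 0 < F k → 1 ≤ A * F k)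
    (hstep : ∀ g ∈ S, ∀ a, A ≤ a → ∀ H : ℕ → ℝ, (∀ l, 0 ≤ H l) → (∀ l, H l ≤ 1) →
      (∀ l, 0 < F l → H l ≤ a * F l) → ∀ k, K₂ ≤ k → conv g H k ≤ a * r * F k)
    (L : List (ℕ → ℝ)) (hL : ∀ g ∈ L, g ∈ S) (k : ℕ) (hk : 0 < F k) :
    convList L k ≤ A * r ^ L.length * F k := by
  have hAr (n : ℕ) : A ≤ A * r ^ n := le_mul_of_one_le_right hA (one_le_pow₀ hr)
  induction L generalizing k with
  | nil =>
    rcases lt_or_ge k K₂ with hk₂ | hk₂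
    · simpa only [convList, List.length_nil, pow_zero, mul_one] using
        (delta0_le_one k).trans (hsmall k hk₂ hk)
    · have hdelta : delta0 k = 0 := if_neg (by omega)
      simp only [convList, hdelta]
      positivity
  | cons g L ih =>
    have hL' : ∀ f ∈ L, f ∈ S := fun f hf => hL f (List.mem_cons_of_mem g hf)
    have hbounds := convList_nonneg_and_le_one fun f hf => hS f (hL f hf)
    rcases lt_or_ge k K₂ with hk₂ | hk₂
    · calc convList (g :: L) k ≤ 1 := (hbounds k).2
        _ ≤ A * F k := hsmall k hk₂ hk
        _ ≤ A * r ^ (g :: L).length * F k := mul_le_mul_of_nonneg_right (hAr _) hk.le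
    · have hH := convList_nonneg_and_le_one fun f hf => hS f (hL' f hf)
      rw [List.length_cons, pow_succ, ← mul_assoc]
      exact hstep g (hL g List.mem_cons_self) _ (hAr _) _ (fun l => (hH l).1) (fun l => (hH l).2)
        (fun l hl => ih hL' l hl) k hk₂

theorem one_le_sum_inv_mul {F : ℕ → ℝ} (hF : ∀ k, 0 ≤ F k) {k K : ℕ} (hk : k < K)
    (hFk : 0 < F k) : 1 ≤ (∑ l ∈ range K, (F l)⁻¹) * F k :=
  calc (1 : ℝ) = (F k)⁻¹ * F k := (inv_mul_cancel₀ hFk.ne').symm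
    _ ≤ (∑ l ∈ range K, (F l)⁻¹) * F k := mul_le_mul_of_nonneg_right
      (single_le_sum (fun l _ => inv_nonneg.2 (hF l)) (mem_range.2 hk)) hFk.le

theorem SLocOne.exists_convList_le {ι : Type*} [Finite ι] {F : ℕ → ℝ} {g : ι → ℕ → ℝ}
    {d ε : ℝ} (hF : IsProbMass F) (hS : SLocOne F) (hg : ∀ i, IsProbMass (g i)) (hd : 0 ≤ d)
    (hgF : ∀ᶠ k in atTop, ∀ i, g i k ≤ d * F k) (hε : 0 < ε) :
    ∃ A > 0, ∀ L : List (ℕ → ℝ), (∀ f ∈ L, f ∈ Set.range g) → ∀ k, 0 < F k →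
      convList L k ≤ A * (1 + ε) ^ L.length * F k := by
  set δ := ε / (2 * (d + 1))
  have hδ : 0 < δ := by positivity
  have hdδ : d * δ + δ = ε / 2 := by simp only [δ]; field_simp
  obtain ⟨K, hKmid, hKpos, hKdom⟩ : ∃ K, (∀ᶠ k in atTop, convMiddle F F K k ≤ δ * F k) ∧
      (∀ l, K ≤ l → 0 < F l) ∧ ∀ l, K ≤ l → ∀ i, g i l ≤ d * F l :=
    ((hS.eventually_convMiddle_le hF.2 hδ).and ((eventually_forall_ge_atTop.2 hS.1).and
      (eventually_forall_ge_atTop.2 hgF))).exists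
  have hlow : ∀ᶠ k in atTop, ∑ l ∈ range K, 1 * F (k - l) ≤ (K + 1) * F k :=
    hS.longTailed.eventually_sum_mul_shift_le (by simp)
  have hhigh : ∀ᶠ k in atTop, ∀ i, ∑ l ∈ range K, g i l * F (k - l) ≤ (1 + δ) * F k :=
    eventually_all.2 fun i => hS.longTailed.eventually_sum_mul_shift_le
      ((sum_le_hasSum _ (fun l _ => (hg i).1 l) (hg i).2).trans_lt (by linarith))
  obtain ⟨K₂, hK₂⟩ := eventually_atTop.1
    (hKmid.and (hlow.and (hhigh.and (eventually_ge_atTop (2 * K + 1)))))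
  have hinv : 0 ≤ ∑ l ∈ range K₂, (F l)⁻¹ := sum_nonneg fun l _ => inv_nonneg.2 (hF.1 l)
  set A := 1 + ∑ l ∈ range K₂, (F l)⁻¹ + 2 * d * (K + 1) / ε
  have hA : 0 < A := by positivity
  refine ⟨A, hA, convList_le_of_conv_le (fun f ⟨i, hi⟩ => hi ▸ hg i) hA.le (by linarith)
    (lt_of_lt_of_le (by omega) (hK₂ K₂ le_rfl).2.2.2) ?_ ?_⟩
  · intro k hk hFk
    refine (one_le_sum_inv_mul hF.1 hk hFk).trans (mul_le_mul_of_nonneg_right ?_ hFk.le)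
    have : 0 ≤ 2 * d * (K + 1) / ε := by positivity
    linarith
  · rintro _ ⟨i, rfl⟩ a haA H hH0 hH1 hHF k hk
    obtain ⟨hmid, hlow, hhigh, hkK⟩ := hK₂ k hk
    have ha : 0 ≤ a := hA.le.trans haA
    have hKa : d * (K + 1) ≤ a * (ε / 2) := by
      have : 2 * d * (K + 1) / ε ≤ a := by simp only [A] at haA; linarith
      rw [div_le_iff₀ hε] at this
      linarith
    refine (conv_le_of_split (hg i).1 hH0 hH1 hd ha (fun l hl => hKdom l hl i)
      (fun l hl => hHF l (hKpos l hl)) (by omega) (by simpa using hlow) (hhigh i) hmid).trans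
      (mul_le_mul_of_nonneg_right ?_ (hF.1 k))
    calc d * (K + 1) + a * (d * δ + 1 + δ) = d * (K + 1) + a * (1 + ε / 2) := by
          rw [← hdδ]; ring
      _ ≤ a * (1 + ε) := by linarith

theorem exists_eventually_le_mul_of_tendsto_div {α ι : Type*} [Fintype ι] {l : Filter α}
    {F : α → ℝ} {g : ι → α → ℝ} {c : ι → ℝ} (hF : ∀ᶠ x in l, 0 < F x)
    (h : ∀ i, Tendsto (fun x => g i x / F x) l (𝓝 (c i))) :
    ∃ d, 0 ≤ d ∧ ∀ᶠ x in l, ∀ i, g i x ≤ d * F x := by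
  refine ⟨∑ i, |c i| + 1, by positivity, eventually_all.2 fun i => ?_⟩
  have hc : c i < ∑ i, |c i| + 1 := by
    have := single_le_sum (fun j _ => abs_nonneg (c j)) (mem_univ i)
    linarith [le_abs_self (c i)]
  filter_upwards [(h i).eventually_lt_const hc, hF] with x hx hFx
  exact ((div_lt_iff₀ hFx).1 hx).le

theorem stmt4_general (m : ℕ) (F : ℕ → ℝ) (Fj : Fin m → ℕ → ℝ)
    (hFnn : ∀ k, 0 ≤ F k) (hFsum : HasSum F 1)
    (hFjnn : ∀ j k, 0 ≤ Fj j k) (hFjsum : ∀ j, HasSum (Fj j) 1)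
    (hSloc : SLocOne F)
    (c : Fin m → ℝ)
    (hlim : ∀ j, Tendsto (fun k => Fj j k / F k) atTop (nhds (c j))) :
    ∀ ε : ℝ, 0 < ε → ∃ C : ℝ, 0 < C ∧
      ∀ (n : Fin m → ℕ), (∀ j, 0 < n j) →
        ∀ k : ℕ, (∀ l, k ≤ l → 0 < F l) →
          convList (((List.finRange m).flatMap fun j => List.replicate (n j) (Fj j))) k
            ≤ C * (1 + ε) ^ (∑ j, n j) * F k := by
  intro ε hε
  obtain ⟨d, hd, hdom⟩ := exists_eventually_le_mul_of_tendsto_div hSloc.1 hlim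
  obtain ⟨C, hC, hbound⟩ := hSloc.exists_convList_le ⟨hFnn, hFsum⟩
    (fun j => ⟨hFjnn j, hFjsum j⟩) hd hdom hε
  refine ⟨C, hC, fun n _ k hk => ?_⟩
  have hmem : ∀ f ∈ (List.finRange m).flatMap fun j => List.replicate (n j) (Fj j),
      f ∈ Set.range Fj := by
    simp only [List.mem_flatMap, List.mem_replicate]
    rintro f ⟨j, -, -, rfl⟩
    exact ⟨j, rfl⟩
  simpa [List.length_flatMap, Fin.sum_univ_def] using hbound _ hmem k (hk k le_rfl)

/-- Uniform Kesten-type bound for convolutions of pmfs asymptotically proportional to a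
locally subexponential pmf `F` (Proposition A.6 of the paper). The condition
`k > sup{k : F(k)=0}` is rendered as `∀ l ≥ k, 0 < F l`. -/
theorem stmt4 (m : ℕ) (F : ℕ → ℝ) (Fj : Fin m → ℕ → ℝ)
    (hFnn : ∀ k, 0 ≤ F k) (hFsum : HasSum F 1)
    (hFjnn : ∀ j k, 0 ≤ Fj j k) (hFjsum : ∀ j, HasSum (Fj j) 1)
    (hSloc : SLocOne F)
    (c : Fin m → ℝ) (hc : ∀ j, 0 ≤ c j)
    (hlim : ∀ j, Tendsto (fun k => Fj j k / F k) atTop (nhds (c j))) :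
    ∀ ε : ℝ, 0 < ε → ∃ C : ℝ, 0 < C ∧
      ∀ (n : Fin m → ℕ), (∀ j, 0 < n j) →
        ∀ k : ℕ, (∀ l, k ≤ l → 0 < F l) →
          convList (((List.finRange m).flatMap fun j => List.replicate (n j) (Fj j))) k
            ≤ C * (1 + ε) ^ (∑ j, n j) * F k :=
  stmt4_general m F Fj hFnn hFsum hFjnn hFjsum hSloc c hlim
end

section
/- Let Φ(0) and G be finite nonnegative square matrices of the same size with sp(Φ(0)) < 1 and sp(G) < 1, and suppose (I − Φ(0))(I − G) = I − S where S = Σ_{l≥0} Φ(−l) is a nonnegative matrix with Se ≤ e. Then sp(S) < 1. -/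
/-!
If `S x = μ x` with `‖μ‖ ≥ 1`, the moduli `w = |x|` satisfy `w ≤ S w`, i.e.
`(I - Φ₀)(I - G) w ≤ 0`. For a nonnegative `A` whose powers tend to zero (by Gelfand's formula,
this is `sp A < 1`), `u ≤ A u` gives `u ≤ Aᵏ u → 0`, so `u ≤ 0`. Applied to `A = Φ₀`,
`u = (I - G) w` and then to `A = G`, `u = w`, this yields `w ≤ 0`, so `x = 0`.
-/
open Filter Topology
open scoped ENNReal Matrix

theorem tendsto_pow_atTop_nhds_zero_of_spectralRadius_lt_one {A : Type*} [NormedRing A]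
    [NormedAlgebra ℂ A] [CompleteSpace A] {a : A} (ha : spectralRadius ℂ a < 1) :
    Tendsto (a ^ ·) atTop (𝓝 0) := by
  obtain ⟨c, hac, hc1⟩ := exists_between ha
  have hbound : ∀ᶠ n : ℕ in atTop, (‖a ^ n‖₊ : ℝ≥0∞) ≤ c ^ n := by
    filter_upwards
      [(spectrum.pow_nnnorm_pow_one_div_tendsto_nhds_spectralRadius a).eventually_lt_const hac,
      eventually_ne_atTop 0] with n hn hn0
    rw [one_div, ENNReal.rpow_inv_lt_iff (by positivity), ENNReal.rpow_natCast] at hn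
    exact hn.le
  have hnorm : Tendsto (fun n : ℕ ↦ (‖a ^ n‖₊ : ℝ≥0∞)) atTop (𝓝 0) :=
    tendsto_of_tendsto_of_tendsto_of_le_of_le' tendsto_const_nhds
      (ENNReal.tendsto_pow_atTop_nhds_zero_iff.2 hc1) (.of_forall fun _ ↦ bot_le) hbound
  rw [← ENNReal.coe_zero, ENNReal.tendsto_coe, ← NNReal.tendsto_coe] at hnorm
  exact tendsto_zero_iff_norm_tendsto_zero.2 hnorm

namespace Matrix

variable {n : Type*} [Fintype n]

theorem map_ofReal_pow [DecidableEq n] (A : Matrix n n ℝ) (k : ℕ) :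
    A.map Complex.ofReal ^ k = (A ^ k).map Complex.ofReal :=
  (map_pow Complex.ofRealHom.mapMatrix A k).symm

-- Any Banach algebra norm serves for Gelfand's formula; the conclusion does not mention it.
attribute [local instance] Matrix.linftyOpNormedRing Matrix.linftyOpNormedAlgebra in
theorem tendsto_pow_atTop_nhds_zero_of_forall_norm_lt_one [DecidableEq n] {A : Matrix n n ℝ}
    (hA : ∀ μ ∈ spectrum ℂ (A.map Complex.ofReal), ‖μ‖ < 1) :
    Tendsto (A ^ ·) atTop (𝓝 0) := by
  cases isEmpty_or_nonempty n
  · exact tendsto_const_nhds.congr fun _ ↦ Subsingleton.elim _ _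
  have hc : Tendsto (A.map Complex.ofReal ^ ·) atTop (𝓝 0) :=
    tendsto_pow_atTop_nhds_zero_of_spectralRadius_lt_one
      (spectrum.spectralRadius_lt_of_forall_lt _ fun μ hμ ↦ mod_cast hA μ hμ)
  have := ((continuous_id.matrix_map Complex.continuous_re).tendsto 0).comp hc
  simpa [Function.comp_def, map_ofReal_pow, map_map] using this

theorem sub_mulVec_nonpos_iff [DecidableEq n] {A : Matrix n n ℝ} {u : n → ℝ} :
    (1 - A) *ᵥ u ≤ 0 ↔ u ≤ A *ᵥ u := by
  rw [sub_mulVec, one_mulVec, sub_nonpos]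

theorem nonpos_of_le_mulVec [DecidableEq n] {A : Matrix n n ℝ} (hA : ∀ i j, 0 ≤ A i j)
    (hpow : Tendsto (A ^ ·) atTop (𝓝 0)) {u : n → ℝ} (hu : u ≤ A *ᵥ u) : u ≤ 0 := by
  have hmono : Monotone (A *ᵥ ·) := fun x y hxy i ↦
    dotProduct_le_dotProduct_of_nonneg_left hxy (hA i)
  have hiter : ∀ k, u ≤ (A ^ k) *ᵥ u := by
    intro k
    induction k with
    | zero => simp
    | succ k ih =>
      calc u ≤ A *ᵥ u := hu
        _ ≤ A *ᵥ ((A ^ k) *ᵥ u) := hmono ih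
        _ = (A ^ (k + 1)) *ᵥ u := by rw [mulVec_mulVec, pow_succ']
  have hlim : Tendsto (fun k ↦ (A ^ k) *ᵥ u) atTop (𝓝 0) := by
    simpa [Function.comp_def] using
      ((continuous_id.matrix_mulVec continuous_const).tendsto 0).comp hpow
  exact ge_of_tendsto' hlim hiter

theorem norm_map_ofReal_mulVec_le {S : Matrix n n ℝ} (hS : ∀ i j, 0 ≤ S i j) (v : n → ℂ)
    (i : n) : ‖(S.map Complex.ofReal *ᵥ v) i‖ ≤ (S *ᵥ fun j ↦ ‖v j‖) i :=
  (norm_sum_le _ _).trans_eq <| Finset.sum_congr rfl fun j _ ↦ by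
    simp [Complex.norm_real, Real.norm_of_nonneg (hS i j)]

theorem exists_ne_zero_norm_mul_le_mulVec_norm [DecidableEq n] {S : Matrix n n ℝ}
    (hS : ∀ i j, 0 ≤ S i j) {μ : ℂ} (hμ : μ ∈ spectrum ℂ (S.map Complex.ofReal)) :
    ∃ v : n → ℂ, v ≠ 0 ∧ ∀ i, ‖μ‖ * ‖v i‖ ≤ (S *ᵥ fun j ↦ ‖v j‖) i := by
  rw [← AlgEquiv.spectrum_eq (toLinAlgEquiv' : Matrix n n ℂ ≃ₐ[ℂ] _)] at hμ
  obtain ⟨v, hv⟩ := (Module.End.HasEigenvalue.of_mem_spectrum hμ).exists_hasEigenvector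
  have hSv : S.map Complex.ofReal *ᵥ v = μ • v := by
    simpa [toLinAlgEquiv'_apply] using hv.apply_eq_smul
  refine ⟨v, hv.right, fun i ↦ ?_⟩
  calc ‖μ‖ * ‖v i‖ = ‖(S.map Complex.ofReal *ᵥ v) i‖ := by simp [hSv]
    _ ≤ (S *ᵥ fun j ↦ ‖v j‖) i := norm_map_ofReal_mulVec_le hS v i

end Matrix

open Matrix

theorem stmt8_general (M : ℕ) (Φ₀ G S : Matrix (Fin M) (Fin M) ℝ)
    (hΦnn : ∀ i j, 0 ≤ Φ₀ i j) (hGnn : ∀ i j, 0 ≤ G i j)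
    (hspΦ : ∀ μ ∈ spectrum ℂ (Φ₀.map (Complex.ofReal)), ‖μ‖ < 1)
    (hspG : ∀ μ ∈ spectrum ℂ (G.map (Complex.ofReal)), ‖μ‖ < 1)
    (hfact : ((1 : Matrix (Fin M) (Fin M) ℝ) - Φ₀) * (1 - G) = 1 - S)
    (hSnn : ∀ i j, 0 ≤ S i j) :
    ∀ μ ∈ spectrum ℂ (S.map (Complex.ofReal)), ‖μ‖ < 1 := by
  intro μ hμ
  by_contra! hμ1
  obtain ⟨v, hv0, hv⟩ := exists_ne_zero_norm_mul_le_mulVec_norm hSnn hμ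
  set w : Fin M → ℝ := fun j ↦ ‖v j‖
  have hwS : w ≤ S *ᵥ w := fun i ↦ (le_mul_of_one_le_left (norm_nonneg _) hμ1).trans (hv i)
  have hΦ : (1 - G) *ᵥ w ≤ Φ₀ *ᵥ ((1 - G) *ᵥ w) := by
    rwa [← sub_mulVec_nonpos_iff, mulVec_mulVec, hfact, sub_mulVec_nonpos_iff]
  have hwG : w ≤ G *ᵥ w := sub_mulVec_nonpos_iff.1 <|
    nonpos_of_le_mulVec hΦnn (tendsto_pow_atTop_nhds_zero_of_forall_norm_lt_one hspΦ) hΦ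
  have hw : w ≤ 0 :=
    nonpos_of_le_mulVec hGnn (tendsto_pow_atTop_nhds_zero_of_forall_norm_lt_one hspG) hwG
  exact hv0 (funext fun j ↦ norm_le_zero_iff.1 (hw j))

/-- If `(I − Φ₀)(I − G) = I − S` with `sp(Φ₀) < 1`, `sp(G) < 1`, and `S` nonnegative
substochastic, then `sp(S) < 1`. Spectral radius strictly below one is rendered as
"every complex eigenvalue has modulus `< 1`". -/
theorem stmt8 (M : ℕ) (Φ₀ G S : Matrix (Fin M) (Fin M) ℝ)
    (hΦnn : ∀ i j, 0 ≤ Φ₀ i j) (hGnn : ∀ i j, 0 ≤ G i j)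
    (hspΦ : ∀ μ ∈ spectrum ℂ (Φ₀.map (Complex.ofReal)), ‖μ‖ < 1)
    (hspG : ∀ μ ∈ spectrum ℂ (G.map (Complex.ofReal)), ‖μ‖ < 1)
    (hfact : ((1 : Matrix (Fin M) (Fin M) ℝ) - Φ₀) * (1 - G) = 1 - S)
    (hSnn : ∀ i j, 0 ≤ S i j) (hSsub : ∀ i, ∑ j, S i j ≤ 1) :
    ∀ μ ∈ spectrum ℂ (S.map (Complex.ofReal)), ‖μ‖ < 1 :=
  stmt8_general M Φ₀ G S hΦnn hGnn hspΦ hspG hfact hSnn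
end

section
/- Let α̅ : ℤ₊ → (0,∞) be a nonincreasing sequence with α̅(k) ~ λ^γ k^{−γ} as k → ∞, where λ > 0 and γ > 1, and let ρ = Σ_{l=0}^{∞} α̅(l) < ∞. Then lim_{k→∞} Σ_{l=0}^{k} α̅(l) α̅(k−l) / α̅(k) = 2ρ. -/
/-!
Split the convolution sum at `k / 2`. On each half the factor `a (k - l) / a k` tends to `1`
for fixed `l` and is bounded by the constant `C` with `a (k / 2) ≤ C * a k`, so by dominated
convergence each half of `∑ a l * a (k - l) / a k` tends to `∑ a`. Regular variation of `a`
supplies both facts: `a (s k) / a k → b ^ (-γ)` whenever `s k / k → b`.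
-/

open Filter Topology Finset Asymptotics

lemma tendsto_natCast_sub_div_self (j : ℕ) :
    Tendsto (fun k : ℕ => ((k - j : ℕ) : ℝ) / k) atTop (𝓝 1) := by
  refine (tendsto_add_atTop_iff_nat j).1
    ((tendsto_natCast_div_add_atTop (j : ℝ)).congr fun m => ?_)
  push_cast [Nat.add_sub_cancel]
  rfl

lemma tendsto_natCast_div_two_div_self :
    Tendsto (fun k : ℕ => ((k / 2 : ℕ) : ℝ) / k) atTop (𝓝 (1 / 2)) := by
  refine ((tendsto_nat_floor_mul_div_atTop (a := (1 / 2 : ℝ)) (by norm_num)).comp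
    tendsto_natCast_atTop_atTop).congr fun k => ?_
  simp only [Function.comp_apply, one_div_mul_eq_div]
  rw [← Nat.cast_ofNat, Nat.floor_div_eq_div]

lemma sum_range_succ_mul_sub_split {R : Type*} [CommSemiring R] (f : ℕ → R) (k : ℕ) :
    ∑ l ∈ range (k + 1), f l * f (k - l) =
      ∑ l ∈ range (k / 2 + 1), f l * f (k - l) +
        ∑ l ∈ range ((k + 1) / 2), f l * f (k - l) := by
  have hsplit := sum_range_add (fun l => f l * f (k - l)) (k / 2 + 1) ((k + 1) / 2)
  rw [show k / 2 + 1 + (k + 1) / 2 = k + 1 by omega] at hsplit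
  rw [hsplit, ← sum_range_reflect _ ((k + 1) / 2)]
  congr 1
  refine sum_congr rfl fun i hi => ?_
  rw [mem_range] at hi
  rw [show k / 2 + 1 + ((k + 1) / 2 - 1 - i) = k - i by omega, show k - (k - i) = i by omega,
    mul_comm]

section ConvolutionRatio

variable {a : ℕ → ℝ} {C : ℝ}

lemma tendsto_sum_range_mul_div_of_two_mul_le (hpos : ∀ k, 0 < a k) (hanti : Antitone a)
    (hsum : Summable a) (hdouble : ∀ k, a (k / 2) ≤ C * a k)
    (hshift : ∀ j, Tendsto (fun k => a (k - j) / a k) atTop (𝓝 1))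
    {n : ℕ → ℕ} (hn : Tendsto n atTop atTop) (hnk : ∀ k l, l < n k → 2 * l ≤ k) :
    Tendsto (fun k => ∑ l ∈ range (n k), a l * (a (k - l) / a k)) atTop
      (𝓝 (∑' l, a l)) := by
  have hC : 0 ≤ C := by
    have h := hdouble 0
    rw [Nat.zero_div] at h
    nlinarith [hpos 0]
  refine (tendsto_tsum_of_dominated_convergence (f := fun k =>
      (range (n k) : Set ℕ).indicator fun l => a l * (a (k - l) / a k))
      (hsum.mul_left C) (fun l => ?_) (Eventually.of_forall fun k l => ?_)).congr
      fun k => (sum_eq_tsum_indicator _ _).symm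
  · have hmem : ∀ᶠ k in atTop, l ∈ range (n k) :=
      (hn.eventually (eventually_gt_atTop l)).mono fun k hk => mem_range.2 hk
    have hlim : Tendsto (fun k => a l * (a (k - l) / a k)) atTop (𝓝 (a l)) := by
      simpa using (hshift l).const_mul (a l)
    exact hlim.congr' (hmem.mono fun k hk =>
      (Set.indicator_of_mem (by exact_mod_cast hk) _).symm)
  · by_cases hl : l < n k
    · rw [Set.indicator_of_mem (by simpa using hl),
        Real.norm_of_nonneg (mul_pos (hpos l) (div_pos (hpos _) (hpos k))).le, mul_comm C]
      have hkl : a (k - l) ≤ C * a k := (hanti (by have := hnk k l hl; omega)).trans (hdouble k)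
      exact mul_le_mul_of_nonneg_left ((div_le_iff₀ (hpos k)).2 hkl) (hpos l).le
    · rw [Set.indicator_of_notMem (by simpa using hl), norm_zero]
      exact mul_nonneg hC (hpos l).le

theorem tendsto_sum_range_mul_sub_div_self (hpos : ∀ k, 0 < a k) (hanti : Antitone a)
    (hsum : Summable a) (hdouble : ∀ k, a (k / 2) ≤ C * a k)
    (hshift : ∀ j, Tendsto (fun k => a (k - j) / a k) atTop (𝓝 1)) :
    Tendsto (fun k => (∑ l ∈ range (k + 1), a l * a (k - l)) / a k) atTop
      (𝓝 (2 * ∑' l, a l)) := by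
  have hhalf : Tendsto (fun k : ℕ => k / 2) atTop atTop :=
    Nat.tendsto_div_const_atTop two_ne_zero
  have hlow := tendsto_sum_range_mul_div_of_two_mul_le hpos hanti hsum hdouble hshift
    (n := fun k => k / 2 + 1) (tendsto_atTop_mono (fun k => by omega) hhalf)
    (fun k l hl => by omega)
  have hhigh := tendsto_sum_range_mul_div_of_two_mul_le hpos hanti hsum hdouble hshift
    (n := fun k => (k + 1) / 2) (tendsto_atTop_mono (fun k => by omega) hhalf)
    (fun k l hl => by omega)
  rw [two_mul]
  refine (hlow.add hhigh).congr fun k => ?_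
  simp only [sum_range_succ_mul_sub_split, add_div, sum_div, mul_div_assoc]

end ConvolutionRatio

lemma tendsto_div_of_isEquivalent_const_mul_rpow {a : ℕ → ℝ} {c γ b : ℝ} (hc : c ≠ 0)
    (ha : a ~[atTop] fun k : ℕ => c * (k : ℝ) ^ (-γ)) {s : ℕ → ℕ} (hs : Tendsto s atTop atTop)
    (hb : b ≠ 0) (hsb : Tendsto (fun k => (s k : ℝ) / k) atTop (𝓝 b)) :
    Tendsto (fun k => a (s k) / a k) atTop (𝓝 (b ^ (-γ))) := by
  refine ((ha.comp_tendsto hs).div ha).symm.tendsto_nhds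
    ((hsb.rpow_const (Or.inl hb)).congr fun k => ?_)
  simp only [Function.comp_apply, Pi.div_apply, mul_div_mul_left _ _ hc]
  exact Real.div_rpow (Nat.cast_nonneg _) (Nat.cast_nonneg _) _

theorem stmt15_general (a : ℕ → ℝ) (lam γ : ℝ) (hlam : 0 < lam)
    (hpos : ∀ k, 0 < a k) (hanti : Antitone a)
    (hasymp : Tendsto (fun k : ℕ => a k / (lam ^ γ * (k : ℝ) ^ (-γ))) atTop (nhds 1))
    (hsum : Summable a) :
    Tendsto (fun k => (∑ l ∈ Finset.range (k + 1), a l * a (k - l)) / a k)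
      atTop (nhds (2 * ∑' l : ℕ, a l)) := by
  have hequiv : a ~[atTop] fun k : ℕ => lam ^ γ * (k : ℝ) ^ (-γ) :=
    isEquivalent_of_tendsto_one hasymp
  have hc : lam ^ γ ≠ 0 := (Real.rpow_pos_of_pos hlam γ).ne'
  obtain ⟨C, hC⟩ := (tendsto_div_of_isEquivalent_const_mul_rpow hc hequiv
    (Nat.tendsto_div_const_atTop two_ne_zero) (by norm_num)
    tendsto_natCast_div_two_div_self).bddAbove_range
  refine tendsto_sum_range_mul_sub_div_self hpos hanti hsum (C := C)
    (fun k => (div_le_iff₀ (hpos k)).1 (hC ⟨k, rfl⟩)) fun j => ?_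
  simpa using tendsto_div_of_isEquivalent_const_mul_rpow hc hequiv (tendsto_sub_atTop_nat j)
    one_ne_zero (tendsto_natCast_sub_div_self j)

/-- If `ᾱ` is a positive nonincreasing sequence with `ᾱ(k) ~ λ^γ k^{−γ}` (`λ > 0`,
`γ > 1`) and `ρ = Σ_l ᾱ(l) < ∞`, then `Σ_{l=0}^k ᾱ(l) ᾱ(k−l) / ᾱ(k) → 2ρ`. -/
theorem stmt15 (a : ℕ → ℝ) (lam γ : ℝ) (hlam : 0 < lam) (hγ : 1 < γ)
    (hpos : ∀ k, 0 < a k) (hanti : Antitone a)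
    (hasymp : Tendsto (fun k : ℕ => a k / (lam ^ γ * (k : ℝ) ^ (-γ))) atTop (nhds 1))
    (hsum : Summable a) :
    Tendsto (fun k => (∑ l ∈ Finset.range (k + 1), a l * a (k - l)) / a k)
      atTop (nhds (2 * ∑' l : ℕ, a l)) :=
  stmt15_general a lam γ hlam hpos hanti hasymp hsum
end

section
/- Let A be the transition kernel sum Σ_{k∈ℤ} A(k) of nonnegative M×M matrices, assumed irreducible and stochastic (Ae = e), with stationary probability vector π (πA = π, πe = 1) and finite first moments Σ_{k∈ℤ}|k| A(k) < ∞. Suppose the analytic factorization I − Â(z) = (I − R̂(z))(I − Φ(0))(I − Ĝ(z)) holds for z in a neighborhood of 1 within the common domain, where Ĝ(z) = Σ_{k≥1} z^{−k} G(k), R̂(z) = Σ_{k≥1} z^k R(k), G := Ĝ(1) is stochastic, R := R̂(1), and all matrices are differentiable at z = 1. Then σ := π (Σ_{k∈ℤ} k A(k)) e = −π (I − R)(I − Φ(0)) (Σ_{k=1}^{∞} k G(k)) e. -/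
/-!
Differentiate `I - Â(z) = (I - R̂(z)) (I - Φ(0)) (I - Ĝ(z))` at `z = 1` by the product rule.
The term containing `R̂'(1)` ends in the factor `I - Ĝ(1)`, which annihilates `e` because
`Ĝ(1)` is stochastic, while `Ĝ'(1) = -Σ k G(k)`. Hence already
`(Σ k A(k)) e = -(I - R)(I - Φ(0)) (Σ k G(k)) e`, and the claim follows by multiplying with `π`.
-/

open Filter Topology Matrix

-- `HasDerivAt` only sees the topology of `Matrix`; the entrywise sup norm gives access to the
-- normed-space calculus (uniqueness of derivatives, `hasDerivAt_pi`).
attribute [local instance] Matrix.normedAddCommGroup Matrix.normedSpace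

namespace Matrix

variable {𝕜 : Type*} [NontriviallyNormedField 𝕜] {l m n : Type*} [Fintype n]

theorem hasDerivAt_iff_hasDerivAt_apply {F : 𝕜 → Matrix m n 𝕜} {F' : Matrix m n 𝕜} {t : 𝕜} :
    HasDerivAt F F' t ↔ ∀ i j, HasDerivAt (fun z => F z i j) (F' i j) t :=
  hasDerivAt_pi.trans (forall_congr' fun _ => hasDerivAt_pi)

variable [Fintype m]

theorem _root_.HasDerivAt.matrix_mul {B : 𝕜 → Matrix l m 𝕜} {C : 𝕜 → Matrix m n 𝕜}
    {B' : Matrix l m 𝕜} {C' : Matrix m n 𝕜} {t : 𝕜}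
    (hB : HasDerivAt B B' t) (hC : HasDerivAt C C' t) :
    HasDerivAt (fun z => B z * C z) (B' * C t + B t * C') t := by
  rw [hasDerivAt_iff_hasDerivAt_apply] at hB hC ⊢
  intro i j
  simp only [mul_apply, add_apply, ← Finset.sum_add_distrib]
  exact HasDerivAt.fun_sum fun k _ => (hB i k).mul (hC k j)

theorem _root_.HasDerivAt.mulVec_eq_of_eventuallyEq_mul [Fintype l]
    {L : 𝕜 → Matrix l n 𝕜} {P : 𝕜 → Matrix l m 𝕜} {Q : 𝕜 → Matrix m n 𝕜}
    {L' : Matrix l n 𝕜} {P' : Matrix l m 𝕜} {Q' : Matrix m n 𝕜} {t : 𝕜} {v : n → 𝕜}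
    (hL : HasDerivAt L L' t) (hP : HasDerivAt P P' t) (hQ : HasDerivAt Q Q' t)
    (hLPQ : L =ᶠ[𝓝 t] fun z => P z * Q z) (hv : Q t *ᵥ v = 0) :
    L' *ᵥ v = (P t * Q') *ᵥ v := by
  have hL' : L' = P' * Q t + P t * Q' :=
    hL.unique ((hP.matrix_mul hQ).congr_of_eventuallyEq hLPQ)
  rw [hL', add_mulVec, ← mulVec_mulVec, hv, mulVec_zero, zero_add]

end Matrix

theorem stmt19_general (M : ℕ)
    (Φ₀ : Matrix (Fin M) (Fin M) ℝ)
    (Ahat Ghat Rhat : ℝ → Matrix (Fin M) (Fin M) ℝ)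
    (piv : Fin M → ℝ)
    (hGstoch : ∀ i, ∑ j, (Ghat 1) i j = 1)
    (δ : ℝ) (hδ : 0 < δ)
    (hfact : ∀ z : ℝ, |z - 1| < δ →
      (1 : Matrix (Fin M) (Fin M) ℝ) - Ahat z = (1 - Rhat z) * (1 - Φ₀) * (1 - Ghat z))
    (A' R' : Matrix (Fin M) (Fin M) ℝ)
    (hdA : ∀ i j, HasDerivAt (fun z => Ahat z i j) (A' i j) 1)
    (Gm : Matrix (Fin M) (Fin M) ℝ)
    (hdG : ∀ i j, HasDerivAt (fun z => Ghat z i j) (-(Gm i j)) 1)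
    (hdR : ∀ i j, HasDerivAt (fun z => Rhat z i j) (R' i j) 1) :
    dotProduct (Matrix.vecMul piv A') (fun _ => 1)
      = - dotProduct
          (Matrix.vecMul piv ((1 - Rhat 1) * (1 - Φ₀) * Gm)) (fun _ => 1) := by
  have hL := (hasDerivAt_iff_hasDerivAt_apply.mpr hdA).const_sub (1 : Matrix (Fin M) (Fin M) ℝ)
  have hP := ((hasDerivAt_iff_hasDerivAt_apply.mpr hdR).const_sub
    (1 : Matrix (Fin M) (Fin M) ℝ)).matrix_mul (hasDerivAt_const 1 (1 - Φ₀))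
  have hQ := ((hasDerivAt_iff_hasDerivAt_apply (F' := -Gm)).mpr hdG).const_sub
    (1 : Matrix (Fin M) (Fin M) ℝ)
  rw [neg_neg] at hQ
  have hfact_near : (fun z => 1 - Ahat z) =ᶠ[𝓝 1]
      fun z => (1 - Rhat z) * (1 - Φ₀) * (1 - Ghat z) :=
    eventually_of_mem (Metric.ball_mem_nhds 1 hδ) fun z hz => hfact z hz
  have hGe : (1 - Ghat 1) *ᵥ (fun _ => 1) = 0 := by
    rw [sub_mulVec, one_mulVec, sub_eq_zero]
    ext i
    simpa [mulVec, dotProduct] using (hGstoch i).symm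
  have key := hL.mulVec_eq_of_eventuallyEq_mul hP hQ hfact_near hGe
  rw [neg_mulVec, neg_eq_iff_eq_neg] at key
  rw [← dotProduct_mulVec, ← dotProduct_mulVec, key, dotProduct_neg]

/-- Lemma 3.1 of the paper: differentiating the factorization
`I − Â(z) = (I − R̂(z))(I − Φ(0))(I − Ĝ(z))` at `z = 1` yields
`σ = π (Σ_k k A(k)) e = − π (I − R)(I − Φ(0)) (Σ_k k G(k)) e`. -/
theorem stmt19 (M : ℕ)
    (A : ℤ → Matrix (Fin M) (Fin M) ℝ) (hAnn : ∀ k i j, 0 ≤ A k i j)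
    (hAmom : ∀ i j, Summable fun k : ℤ => |(k : ℝ)| * A k i j)
    (G R : ℕ → Matrix (Fin M) (Fin M) ℝ)
    (hGnn : ∀ m i j, 0 ≤ G m i j) (hRnn : ∀ m i j, 0 ≤ R m i j)
    (Φ₀ : Matrix (Fin M) (Fin M) ℝ)
    (Ahat Ghat Rhat : ℝ → Matrix (Fin M) (Fin M) ℝ)
    (hAhat : ∀ z, Ahat z = Matrix.of fun i j => ∑' k : ℤ, z ^ k * A k i j)
    (hGhat : ∀ z, Ghat z = Matrix.of fun i j => ∑' m : ℕ, z⁻¹ ^ (m + 1) * G (m + 1) i j)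
    (hRhat : ∀ z, Rhat z = Matrix.of fun i j => ∑' m : ℕ, z ^ (m + 1) * R (m + 1) i j)
    (piv : Fin M → ℝ) (hpivnn : ∀ i, 0 ≤ piv i)
    (hpivA : Matrix.vecMul piv (Ahat 1) = piv) (hpiv1 : ∑ i, piv i = 1)
    (hAstoch : ∀ i, ∑ j, (Ahat 1) i j = 1)
    (hGstoch : ∀ i, ∑ j, (Ghat 1) i j = 1)
    (δ : ℝ) (hδ : 0 < δ)
    (hfact : ∀ z : ℝ, |z - 1| < δ →
      (1 : Matrix (Fin M) (Fin M) ℝ) - Ahat z = (1 - Rhat z) * (1 - Φ₀) * (1 - Ghat z))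
    (A' R' : Matrix (Fin M) (Fin M) ℝ)
    (hA' : ∀ i j, A' i j = ∑' k : ℤ, (k : ℝ) * A k i j)
    (hdA : ∀ i j, HasDerivAt (fun z => Ahat z i j) (A' i j) 1)
    (Gm : Matrix (Fin M) (Fin M) ℝ)
    (hGm : ∀ i j, Gm i j = ∑' m : ℕ, ((m : ℝ) + 1) * G (m + 1) i j)
    (hdG : ∀ i j, HasDerivAt (fun z => Ghat z i j) (-(Gm i j)) 1)
    (hdR : ∀ i j, HasDerivAt (fun z => Rhat z i j) (R' i j) 1) :
    dotProduct (Matrix.vecMul piv A') (fun _ => 1)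
      = - dotProduct
          (Matrix.vecMul piv ((1 - Rhat 1) * (1 - Φ₀) * Gm)) (fun _ => 1) :=
  stmt19_general M Φ₀ Ahat Ghat Rhat piv hGstoch δ hδ hfact A' R' hdA Gm hdG hdR
end
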